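/- arXiv:1101.3126 — 5 statements merged into one kernel-verified Lean document; each statement's English description precedes it below -/
import Mathlib

section
/- Let G be a graph on vertex set V = {v_1, ..., v_n} with s = v_1, t = v_n, and vertex coloring c : V → S. Construct G' by adding four new vertices s', t', a, b, with edge set E(G') = E(G) ∪ {s's, t't} ∪ {a v_i : i ∈ [n]} ∪ {b v_i : i ∈ [n]}, and define c' by c'(v) = c(v) for v ∈ V \ {s, t}, c'(s) = c'(a) = c_1, c'(t) = c'(b) = c_2 for two distinct new colors c_1, c_2. Then every path from s' to t' in G' that is rainbow under c' passes through s and t, contains neither a nor b, and its subpath from s to t is a path in G that is rainbow under c. -/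
open SimpleGraph

/-!
The only neighbour of `s'` is `s` and the only neighbour of `t'` is `t`, so a path from `s'` to
`t'` has internal part a path from `s` to `t`, and both `s` and `t` are internal. Since `a` has the
colour of `s` and `b` that of `t`, rainbowness keeps `a` and `b` off the path, so it runs inside
the copy of `G`, where `c'` agrees with `c` away from `s` and `t`.
-/

/-- A walk is a rainbow path if it is a path and its internal vertices
(the support without the first and last vertex) receive pairwise distinct colors. -/
def IsRainbowPath {V α : Type*} (G : SimpleGraph V) (c : V → α) {u v : V}
    (p : G.Walk u v) : Prop :=
  p.IsPath ∧ (p.support.tail.dropLast.map c).Nodup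

/-- The graph `G'` obtained from `G` by adding four new vertices
`s' = Sum.inr 0`, `t' = Sum.inr 1`, `a = Sum.inr 2`, `b = Sum.inr 3`,
where `s'` is joined to `s`, `t'` is joined to `t`, and `a` and `b` are joined
to every original vertex. -/
def extGraph {V : Type*} (G : SimpleGraph V) (s t : V) : SimpleGraph (V ⊕ Fin 4) :=
  SimpleGraph.fromRel (fun x y =>
    (∃ u v : V, x = Sum.inl u ∧ y = Sum.inl v ∧ G.Adj u v) ∨
    (x = Sum.inr 0 ∧ y = Sum.inl s) ∨
    (x = Sum.inr 1 ∧ y = Sum.inl t) ∨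
    (∃ u : V, x = Sum.inr 2 ∧ y = Sum.inl u) ∨
    (∃ u : V, x = Sum.inr 3 ∧ y = Sum.inl u))

namespace SimpleGraph.Walk

variable {V : Type*} {G : SimpleGraph V}

lemma IsPath.ne_and_ne_of_mem_tail_dropLast_support {u v x : V} {q : G.Walk u v}
    (hq : q.IsPath) (hx : x ∈ q.support.tail.dropLast) : x ≠ u ∧ x ≠ v := by
  have hnodup := hq.support_nodup
  constructor
  · rintro rfl
    rw [← q.cons_tail_support, List.nodup_cons] at hnodup
    exact hnodup.1 (List.dropLast_subset _ hx)
  · rintro rfl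
    rw [← q.dropLast_support_concat, List.nodup_append] at hnodup
    rw [← List.tail_dropLast] at hx
    exact hnodup.2.2 _ (List.tail_subset _ hx) _ (List.mem_singleton_self _) rfl

lemma exists_support_eq_cons_of_forall_adj_eq {u v y : V} (w : G.Walk u v) (huv : u ≠ v)
    (hy : ∀ x, G.Adj u x → x = y) : ∃ r : G.Walk y v, w.support = u :: r.support := by
  cases w with
  | nil => exact absurd rfl huv
  | cons h r => exact ⟨r.copy (hy _ h) rfl, by simp⟩

lemma exists_support_eq_concat_of_forall_adj_eq {u v y : V} (w : G.Walk u v) (huv : u ≠ v)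
    (hy : ∀ x, G.Adj x v → x = y) : ∃ r : G.Walk u y, w.support = r.support ++ [v] := by
  obtain ⟨r, hr⟩ :=
    w.reverse.exists_support_eq_cons_of_forall_adj_eq huv.symm fun x h => hy x h.symm
  exact ⟨r.reverse, by simpa using congrArg List.reverse hr⟩

lemma exists_support_map_eq_of_support_subset_range {W : Type*} {H : SimpleGraph W} {f : V → W}
    (hf : Function.Injective f) (hadj : ∀ {u v}, H.Adj (f u) (f v) → G.Adj u v) {u v : V}
    (w : H.Walk (f u) (f v)) (hw : ∀ z ∈ w.support, z ∈ Set.range f) :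
    ∃ q : G.Walk u v, q.support.map f = w.support := by
  generalize hx : f u = x, hy : f v = y at w
  induction w generalizing u with
  | nil =>
    obtain rfl := hf (hx.trans hy.symm)
    exact ⟨nil, by simp [hx]⟩
  | @cons _ b _ h w ih =>
    obtain ⟨u', rfl⟩ : b ∈ Set.range f := hw b (by simp)
    subst hx
    obtain ⟨q, hq⟩ := ih rfl hy fun z hz => hw z (by simp [hz])
    exact ⟨cons (hadj h) q, by simp [hq]⟩

end SimpleGraph.Walk

lemma isRainbowPath_of_nodup_map {V α : Type*} {G : SimpleGraph V} {c d : V → α} {u v : V}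
    (q : G.Walk u v) (hd : (q.support.map d).Nodup)
    (hcd : ∀ x ∈ q.support, x ≠ u → x ≠ v → c x = d x) : IsRainbowPath G c q := by
  have hq : q.IsPath := (Walk.isPath_def q).mpr (hd.of_map d)
  have hsub : q.support.tail.dropLast.Sublist q.support :=
    (List.dropLast_sublist _).trans (List.tail_sublist _)
  have hcd_internal : ∀ x ∈ q.support.tail.dropLast, c x = d x := fun x hx =>
    have ⟨hxu, hxv⟩ := hq.ne_and_ne_of_mem_tail_dropLast_support hx
    hcd x (hsub.subset hx) hxu hxv
  refine ⟨hq, ?_⟩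
  rw [List.map_congr_left hcd_internal]
  exact (hsub.map d).nodup hd

section extGraph

variable {V : Type*} {G : SimpleGraph V} {s t : V}

lemma extGraph_adj_inr_zero_left {x : V ⊕ Fin 4} :
    (extGraph G s t).Adj (Sum.inr 0) x ↔ x = Sum.inl s := by
  unfold extGraph; rw [fromRel_adj]; aesop

lemma extGraph_adj_inr_one_right {x : V ⊕ Fin 4} :
    (extGraph G s t).Adj x (Sum.inr 1) ↔ x = Sum.inl t := by
  unfold extGraph; rw [fromRel_adj]; aesop

lemma extGraph_adj_inl_inl {u v : V} :
    (extGraph G s t).Adj (Sum.inl u) (Sum.inl v) ↔ G.Adj u v := by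
  unfold extGraph; rw [fromRel_adj]; aesop (add simp G.adj_symm)

lemma extGraph_exists_walk_support_eq (p : (extGraph G s t).Walk (Sum.inr 0) (Sum.inr 1)) :
    ∃ r : (extGraph G s t).Walk (Sum.inl s) (Sum.inl t),
      p.support = Sum.inr 0 :: (r.support ++ [Sum.inr 1]) := by
  obtain ⟨r₀, h₀⟩ := p.exists_support_eq_cons_of_forall_adj_eq (by simp)
    fun _ => extGraph_adj_inr_zero_left.mp
  obtain ⟨r, hr⟩ := r₀.exists_support_eq_concat_of_forall_adj_eq (by simp)
    fun _ => extGraph_adj_inr_one_right.mp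
  exact ⟨r, by rw [h₀, hr]⟩

end extGraph

theorem rainbow_path_ext_structure_general {V S : Type*} (G : SimpleGraph V) (s t : V)
    (c : V → S) (c₁ c₂ : S)
    (c' : V ⊕ Fin 4 → S)
    (hmid : ∀ v : V, v ≠ s → v ≠ t → c' (Sum.inl v) = c v)
    (hs : c' (Sum.inl s) = c₁) (ht : c' (Sum.inl t) = c₂)
    (ha : c' (Sum.inr 2) = c₁) (hb : c' (Sum.inr 3) = c₂)
    (p : (extGraph G s t).Walk (Sum.inr 0) (Sum.inr 1))
    (hp : IsRainbowPath (extGraph G s t) c' p) :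
    Sum.inl s ∈ p.support ∧ Sum.inl t ∈ p.support ∧
      (Sum.inr 2 : V ⊕ Fin 4) ∉ p.support ∧ (Sum.inr 3 : V ⊕ Fin 4) ∉ p.support ∧
      ∃ q : G.Walk s t, IsRainbowPath G c q ∧
        p.support = Sum.inr 0 :: (q.support.map Sum.inl ++ [Sum.inr 1]) := by
  obtain ⟨r, hpr⟩ := extGraph_exists_walk_support_eq p
  have hr_colors : (r.support.map c').Nodup := by simpa [IsRainbowPath, hpr] using hp.2
  have hr_ends : Sum.inr 0 ∉ r.support ∧ Sum.inr 1 ∉ r.support := by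
    have hnodup := hp.1.support_nodup
    rw [hpr, List.nodup_cons, List.nodup_append] at hnodup
    exact ⟨by simpa using hnodup.1, fun h => hnodup.2.2.2 _ h _ (List.mem_singleton_self _) rfl⟩
  -- `a` and `b` repeat the colours of `s` and `t`, which every such path uses internally.
  have ha_notMem : Sum.inr 2 ∉ r.support := fun h => by
    simpa using List.inj_on_of_nodup_map hr_colors h r.start_mem_support (ha.trans hs.symm)
  have hb_notMem : Sum.inr 3 ∉ r.support := fun h => by
    simpa using List.inj_on_of_nodup_map hr_colors h r.end_mem_support (hb.trans ht.symm)
  have hr_range : ∀ z ∈ r.support, z ∈ Set.range Sum.inl := by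
    rintro (z | i) hz
    · exact ⟨z, rfl⟩
    · fin_cases i <;> simp_all
  obtain ⟨q, hq⟩ := r.exists_support_map_eq_of_support_subset_range Sum.inl_injective
    extGraph_adj_inl_inl.mp hr_range
  refine ⟨by simp [hpr], by simp [hpr], by simp [hpr, ha_notMem], by simp [hpr, hb_notMem], q,
    ?_, by rw [hpr, hq]⟩
  rw [← hq, List.map_map] at hr_colors
  exact isRainbowPath_of_nodup_map q hr_colors fun x _ hxs hxt => (hmid x hxs hxt).symm

/-- every rainbow path from `s'` to `t'` in `G'` passes through `s` and `t`,
avoids `a` and `b`, and its subpath from `s` to `t` is a rainbow path of `G` under `c`. -/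
theorem rainbow_path_ext_structure {V S : Type*} (G : SimpleGraph V) (s t : V) (hst : s ≠ t)
    (c : V → S) (c₁ c₂ : S)
    (hc₁ : c₁ ∉ Set.range c) (hc₂ : c₂ ∉ Set.range c) (h₁₂ : c₁ ≠ c₂)
    (c' : V ⊕ Fin 4 → S)
    (hmid : ∀ v : V, v ≠ s → v ≠ t → c' (Sum.inl v) = c v)
    (hs : c' (Sum.inl s) = c₁) (ht : c' (Sum.inl t) = c₂)
    (ha : c' (Sum.inr 2) = c₁) (hb : c' (Sum.inr 3) = c₂)
    (p : (extGraph G s t).Walk (Sum.inr 0) (Sum.inr 1))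
    (hp : IsRainbowPath (extGraph G s t) c' p) :
    Sum.inl s ∈ p.support ∧ Sum.inl t ∈ p.support ∧
      (Sum.inr 2 : V ⊕ Fin 4) ∉ p.support ∧ (Sum.inr 3 : V ⊕ Fin 4) ∉ p.support ∧
      ∃ q : G.Walk s t, IsRainbowPath G c q ∧
        p.support = Sum.inr 0 :: (q.support.map Sum.inl ++ [Sum.inr 1]) :=
  rainbow_path_ext_structure_general G s t c c₁ c₂ c' hmid hs ht ha hb p hp
end

section
/- Let φ be a 3-CNF formula with clauses c_1, ..., c_m over variables x_1, ..., x_n in which each variable x_j occurs positively in exactly k_j ≥ 1 clauses and negatively in exactly ℓ_j ≥ 1 clauses. Construct the vertex-colored graph G_φ as follows: for each variable x_j fix k_j·ℓ_j distinct colors α^j_{a,b} (a ∈ [k_j], b ∈ [ℓ_j]), colors for different variables being distinct; for the a-th positive occurrence of x_j (lying in some clause c_i) introduce a new path on ℓ_j vertices colored α^j_{a,1}, ..., α^j_{a,ℓ_j} in order and associate it with clause c_i; for the b-th negative occurrence of x_j (lying in some clause c_i) introduce a new path on k_j vertices colored α^j_{1,b}, ..., α^j_{k_j,b} in order and associate it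 with c_i; add two vertices s and t; for each 1 ≤ i ≤ m, join the first vertex of every path associated with c_i to the last vertex of every path associated with c_{i-1} (for i = 1, join the first vertex of every path associated with c_1 to s); and join the last vertex of every path associated with c_m to t. Then: if G_φ contains a rainbow path from s to t, then φ is satisfiable. -/
open SimpleGraph

namespace SatGadget

variable {m n : ℕ}

/-- The number of clauses in which the literal `(j, b)` occurs
(`b = true` is the positive literal `x_j`, `b = false` is `¬ x_j`).
So `occCount φ j true = k_j` and `occCount φ j false = ℓ_j`. -/
def occCount (φ : Fin m → Finset (Fin n × Bool)) (j : Fin n) (b : Bool) : ℕ :=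
  (Finset.univ.filter fun i : Fin m => (j, b) ∈ φ i).card

/-- The number of vertices of the path introduced for an occurrence of the literal
`(j, b)`: a positive occurrence of `x_j` gets a path on `ℓ_j` vertices, a
negative occurrence gets a path on `k_j` vertices. -/
def pathLen (φ : Fin m → Finset (Fin n × Bool)) (j : Fin n) (b : Bool) : ℕ :=
  occCount φ j (!b)

/-- The index of clause `i` among the clauses containing the literal `(j, b)`,
i.e. this occurrence of `(j, b)` in clause `i` is the `occIdx`-th occurrence
(counting from 0, occurrences ordered by clause index). -/
def occIdx (φ : Fin m → Finset (Fin n × Bool)) (j : Fin n) (b : Bool) (i : Fin m) : ℕ :=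
  (Finset.univ.filter fun i' : Fin m => (j, b) ∈ φ i' ∧ i' < i).card

/-- A vertex of one of the occurrence paths: it records the clause `i`, the literal
`(j, b) ∈ φ i` whose occurrence in clause `i` it belongs to, and its position on
the corresponding path. -/
def PathVert (φ : Fin m → Finset (Fin n × Bool)) : Type :=
  {q : Fin m × (Fin n × Bool) × ℕ // q.2.1 ∈ φ q.1 ∧ q.2.2 < pathLen φ q.2.1.1 q.2.1.2}

/-- The vertex set of `G_φ`: `Sum.inl true = s`, `Sum.inl false = t`, plus the
vertices of the occurrence paths. -/
def Vert (φ : Fin m → Finset (Fin n × Bool)) : Type := Bool ⊕ PathVert φ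

/-- The adjacency generating relation of `G_φ`: consecutive vertices of an occurrence
path are joined; the last vertex of every path associated with clause `i` is joined to
the first vertex of every path associated with clause `i+1`; `s` is joined to the first
vertex of every path of clause `1`; the last vertex of every path of clause `m` is
joined to `t`. -/
def rel (φ : Fin m → Finset (Fin n × Bool)) : Vert φ → Vert φ → Prop
  | Sum.inr q, Sum.inr q' =>
      (q.1.1 = q'.1.1 ∧ q.1.2.1 = q'.1.2.1 ∧ q'.1.2.2 = q.1.2.2 + 1) ∨
      ((q'.1.1 : ℕ) = (q.1.1 : ℕ) + 1 ∧ q.1.2.2 + 1 = pathLen φ q.1.2.1.1 q.1.2.1.2 ∧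
        q'.1.2.2 = 0)
  | Sum.inl true, Sum.inr q => (q.1.1 : ℕ) = 0 ∧ q.1.2.2 = 0
  | Sum.inr q, Sum.inl false =>
      (q.1.1 : ℕ) = m - 1 ∧ q.1.2.2 + 1 = pathLen φ q.1.2.1.1 q.1.2.1.2
  | _, _ => False

/-- The graph `G_φ`. -/
def graph (φ : Fin m → Finset (Fin n × Bool)) : SimpleGraph (Vert φ) :=
  SimpleGraph.fromRel (rel φ)

/-- The vertex coloring of `G_φ`: for each variable `x_j` the colors are
`α^j_{a,b} = Sum.inl (j, a, b)`; the `p`-th vertex of the path of the `a`-th positive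
occurrence of `x_j` gets color `α^j_{a,p}`, and the `p`-th vertex of the path of the
`b`-th negative occurrence of `x_j` gets color `α^j_{p,b}`; so colors of different
variables are distinct.  The vertices `s` and `t` get their own colors. -/
def coloring (φ : Fin m → Finset (Fin n × Bool)) : Vert φ → (Fin n × ℕ × ℕ) ⊕ Bool
  | Sum.inl b => Sum.inr b
  | Sum.inr q => Sum.inl (q.1.2.1.1,
      if q.1.2.1.2 then (occIdx φ q.1.2.1.1 true q.1.1, q.1.2.2)
      else (q.1.2.2, occIdx φ q.1.2.1.1 false q.1.1))

end SatGadget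

/-!
Let `S_i` consist of `s`, the path vertices of the clauses before `c_i`, and those initial
segments of the paths of `c_i` that the walk visits entirely. An edge of the walk leaving `S_i`
can only start at the last vertex of a path of `c_i`, so the walk from `s ∈ S_i` to `t ∉ S_i`
visits every vertex of some path of each clause. Make `x_j` true iff the walk visits a whole positive-occurrence path of
`x_j`. If it also visited the whole path of the `b`-th negative occurrence while visiting that of
the `a`-th positive one, it would meet the color `α^j_{a,b}` twice.
-/

theorem SimpleGraph.Walk.mem_support_tail_dropLast {V : Type*} {G : SimpleGraph V} {u v x : V}
    (p : G.Walk u v) (hx : x ∈ p.support) (hu : x ≠ u) (hv : x ≠ v) :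
    x ∈ p.support.tail.dropLast := by
  have htail : x ∈ p.support.tail := by
    rw [← p.cons_tail_support, List.mem_cons] at hx
    exact hx.resolve_left hu
  refine List.mem_dropLast_of_mem_of_ne_getLast htail ?_
  rwa [List.getLast_tail, p.getLast_support]

theorem IsRainbowPath.eq_of_color_eq {V α : Type*} {G : SimpleGraph V} {c : V → α} {u v x y : V}
    {p : G.Walk u v} (hp : IsRainbowPath G c p) (hx : x ∈ p.support) (hy : y ∈ p.support)
    (hxu : x ≠ u) (hxv : x ≠ v) (hyu : y ≠ u) (hyv : y ≠ v) (hxy : c x = c y) : x = y :=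
  List.inj_on_of_nodup_map hp.2 (p.mem_support_tail_dropLast hx hxu hxv)
    (p.mem_support_tail_dropLast hy hyu hyv) hxy

namespace SatGadget

variable {m n : ℕ} {φ : Fin m → Finset (Fin n × Bool)}

section Traversal

variable {u v : Vert φ}

def VisitedUpTo (p : (graph φ).Walk u v) (q : PathVert φ) : Prop :=
  ∀ q' : PathVert φ, q'.1.1 = q.1.1 → q'.1.2.1 = q.1.2.1 → q'.1.2.2 ≤ q.1.2.2 →
    Sum.inr q' ∈ p.support

def FullyVisited (p : (graph φ).Walk u v) (i : Fin m) (l : Fin n × Bool) : Prop :=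
  ∀ q : PathVert φ, q.1.1 = i → q.1.2.1 = l → Sum.inr q ∈ p.support

def Settled (p : (graph φ).Walk u v) (i : Fin m) : Vert φ → Prop
  | Sum.inl b => b = true
  | Sum.inr q => (q.1.1 : ℕ) < i ∨ q.1.1 = i ∧ VisitedUpTo p q

variable {p : (graph φ).Walk u v} {i : Fin m}

lemma visitedUpTo_of_mem {q : PathVert φ} (hq : Sum.inr q ∈ p.support)
    (hlt : ∀ q' : PathVert φ, q'.1.1 = q.1.1 → q'.1.2.1 = q.1.2.1 → q'.1.2.2 < q.1.2.2 →
      Sum.inr q' ∈ p.support) :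
    VisitedUpTo p q := by
  intro q' hc hl hr
  obtain hr | hr := hr.lt_or_eq
  · exact hlt q' hc hl hr
  · obtain rfl : q' = q := Subtype.ext (Prod.ext hc (Prod.ext hl hr))
    exact hq

lemma fullyVisited_of_visitedUpTo {q : PathVert φ} (hq : VisitedUpTo p q)
    (hlast : q.1.2.2 + 1 = pathLen φ q.1.2.1.1 q.1.2.1.2) :
    FullyVisited p q.1.1 q.1.2.1 := by
  intro q' hc hl
  have hr := q'.2.2
  rw [hl] at hr
  exact hq q' hc hl (by omega)

lemma settled_of_pos_eq_zero {q : PathVert φ} (hq : Sum.inr q ∈ p.support)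
    (hr : q.1.2.2 = 0) (hi : (q.1.1 : ℕ) ≤ i) : Settled p i (Sum.inr q) := by
  obtain hi | hi := hi.lt_or_eq
  · exact Or.inl hi
  · exact Or.inr ⟨Fin.ext hi, visitedUpTo_of_mem hq fun _ _ _ h => by omega⟩

lemma settled_or_fullyVisited_of_adj {a b : Vert φ} (ha : Settled p i a)
    (hab : (graph φ).Adj a b) (hb : b ∈ p.support) :
    Settled p i b ∨ ∃ l ∈ φ i, FullyVisited p i l := by
  have exit : ∀ q : PathVert φ, q.1.1 = i → VisitedUpTo p q →
      q.1.2.2 + 1 = pathLen φ q.1.2.1.1 q.1.2.1.2 → ∃ l ∈ φ i, FullyVisited p i l := by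
    rintro q rfl hq hlast
    exact ⟨q.1.2.1, q.2.1, fullyVisited_of_visitedUpTo hq hlast⟩
  obtain ⟨-, hrel⟩ := (fromRel_adj _ _ _).mp hab
  rcases a with (_ | _) | q <;> rcases b with (_ | _) | q' <;>
    simp only [Settled, rel, or_false, false_or, Bool.false_eq_true, true_or] at ha hrel ⊢
  · exact Or.inl (settled_of_pos_eq_zero hb hrel.2 (by omega))
  · obtain hi | ⟨hi, hq⟩ := ha
    · omega
    · exact exit q hi hq hrel.2
  · obtain hi | ⟨hi, hq⟩ := ha <;>
      obtain (⟨hc, hl, hr⟩ | ⟨hc, hlast, hr⟩) | (⟨hc, hl, hr⟩ | ⟨hc, hlast, hr⟩) := hrel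
    · exact Or.inl (Or.inl (by rw [← hc]; exact hi))
    · exact Or.inl (settled_of_pos_eq_zero hb hr (by omega))
    · exact Or.inl (Or.inl (by rw [hc]; exact hi))
    · exact Or.inl (Or.inl (by omega))
    · refine Or.inl (Or.inr ⟨hc ▸ hi, visitedUpTo_of_mem hb fun q'' hc' hl' hr' => ?_⟩)
      exact hq q'' (hc'.trans hc.symm) (hl'.trans hl.symm) (by omega)
    · exact Or.inr (exit q hi hq hlast)
    · refine Or.inl (Or.inr ⟨hc.trans hi, fun q'' hc' hl' hr' => ?_⟩)
      exact hq q'' (hc'.trans hc) (hl'.trans hl) (by omega)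
    · exact Or.inl (Or.inl (by omega))

end Traversal

theorem exists_fullyVisited (p : (graph φ).Walk (Sum.inl true) (Sum.inl false)) (i : Fin m) :
    ∃ l ∈ φ i, FullyVisited p i l := by
  obtain ⟨d, hd, hfst, hsnd⟩ :=
    p.exists_boundary_dart (Set.ofPred (Settled p i)) rfl Bool.false_ne_true
  exact (settled_or_fullyVisited_of_adj hfst d.adj
    (p.dart_snd_mem_support_of_mem_darts hd)).resolve_left hsnd

lemma occIdx_lt_occCount {j : Fin n} {b : Bool} {i : Fin m} (h : (j, b) ∈ φ i) :
    occIdx φ j b i < occCount φ j b := by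
  unfold occIdx occCount
  rw [← Finset.filter_filter]
  exact Finset.card_lt_card (Finset.filter_ssubset.mpr ⟨i, by simpa using h, lt_irrefl i⟩)

lemma not_fullyVisited_pos_and_neg {p : (graph φ).Walk (Sum.inl true) (Sum.inl false)}
    (hp : IsRainbowPath (graph φ) (coloring φ) p) {j : Fin n} {i₁ i₂ : Fin m}
    (h₁ : (j, true) ∈ φ i₁) (h₂ : (j, false) ∈ φ i₂)
    (hv₁ : FullyVisited p i₁ (j, true)) (hv₂ : FullyVisited p i₂ (j, false)) : False := by
  let x : PathVert φ := ⟨(i₁, (j, true), occIdx φ j false i₂), h₁, occIdx_lt_occCount h₂⟩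
  let y : PathVert φ := ⟨(i₂, (j, false), occIdx φ j true i₁), h₂, occIdx_lt_occCount h₁⟩
  have hxy : (Sum.inr x : Vert φ) = Sum.inr y :=
    hp.eq_of_color_eq (hv₁ x rfl rfl) (hv₂ y rfl rfl) Sum.inr_ne_inl Sum.inr_ne_inl
      Sum.inr_ne_inl Sum.inr_ne_inl rfl
  exact Bool.noConfusion (congrArg (fun q : PathVert φ => q.1.2.1.2) (Sum.inr_injective hxy))

end SatGadget

open SatGadget in
theorem satisfiable_of_rainbow_path_general {m n : ℕ}
    (φ : Fin m → Finset (Fin n × Bool))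
    (p : (graph φ).Walk (Sum.inl true) (Sum.inl false))
    (hp : IsRainbowPath (graph φ) (coloring φ) p) :
    ∃ σ : Fin n → Bool, ∀ i : Fin m, ∃ l ∈ φ i, σ l.1 = l.2 := by
  classical
  refine ⟨fun j => decide (∃ i, (j, true) ∈ φ i ∧ FullyVisited p i (j, true)), fun i => ?_⟩
  obtain ⟨⟨j, b⟩, hmem, hvis⟩ := exists_fullyVisited p i
  refine ⟨(j, b), hmem, ?_⟩
  cases b
  · simpa using fun i' h' hvis' => not_fullyVisited_pos_and_neg hp h' hmem hvis' hvis
  · simpa using ⟨i, hmem, hvis⟩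

open SatGadget in
/-- if `G_φ` contains a rainbow path from `s` to `t`, then the 3-CNF
formula `φ` is satisfiable. -/
theorem satisfiable_of_rainbow_path {m n : ℕ} (hm : 0 < m)
    (φ : Fin m → Finset (Fin n × Bool))
    (h3 : ∀ i, (φ i).card ≤ 3)
    (hk : ∀ j, 1 ≤ occCount φ j true) (hl : ∀ j, 1 ≤ occCount φ j false)
    (p : (graph φ).Walk (Sum.inl true) (Sum.inl false))
    (hp : IsRainbowPath (graph φ) (coloring φ) p) :
    ∃ σ : Fin n → Bool, ∀ i : Fin m, ∃ l ∈ φ i, σ l.1 = l.2 :=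
  satisfiable_of_rainbow_path_general φ p hp
end

section
/- Let φ be a 3-CNF formula with clauses c_1, ..., c_m over variables x_1, ..., x_n in which each variable x_j occurs positively in exactly k_j ≥ 1 clauses and negatively in exactly ℓ_j ≥ 1 clauses, and let G_φ be the vertex-colored graph constructed as follows: for each variable x_j fix k_j·ℓ_j distinct colors α^j_{a,b} (a ∈ [k_j], b ∈ [ℓ_j]), colors for different variables being distinct; for the a-th positive occurrence of x_j (lying in some clause c_i) introduce a new path on ℓ_j vertices colored α^j_{a,1}, ..., α^j_{a,ℓ_j} in order and associate it with clause c_i; for the b-th negative occurrence of x_j (lying in some clause c_i) introduce a new path on k_j vertices colored α^j_{1,b}, ..., α^j_{k_j,b} in order and associate it with c_i; add two vertices s and t; for each 1 ≤ i ≤ m, join the first vertex of every path associated with c_i to the last vertex of every path associated with c_{i-1} (for i = 1, join to s); and join the last vertex of every path associated with c_m to t. If φ is satisfiable, then G_φ contains a rainbow path from s to t. -/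
open SimpleGraph

/-!
Fix a satisfying assignment `σ` and in every clause `c_i` a literal `lit i` made true by `σ`.
Running from `s` through the occurrence paths of `lit 1, …, lit m` in turn and then to `t` gives
an `s`–`t` path. It is rainbow because all chosen literals of a variable `x_j` have the same sign
`σ x_j`: if it is positive, the paths of distinct occurrences use distinct rows `α^j_{a,·}` of the
colour grid of `x_j`, if it is negative, distinct columns `α^j_{·,b}`.
-/

namespace List
variable {α : Type*} {R : α → α → Prop}

theorem isChain_flatten_ofFn {k : ℕ} {f : Fin k → List α} (hne : ∀ i, f i ≠ [])
    (hf : ∀ i, (f i).IsChain R)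
    (hstep : ∀ i (h : i + 1 < k),
      R ((f ⟨i, by omega⟩).getLast (hne _)) ((f ⟨i + 1, h⟩).head (hne _))) :
    (ofFn f).flatten.IsChain R := by
  rw [isChain_flatten (by simpa [mem_ofFn] using fun i => (hne i).symm), isChain_ofFn]
  refine ⟨by simpa [mem_ofFn] using hf, fun i h => ?_⟩
  simpa [getLast?_eq_some_getLast (hne _), head?_eq_some_head (hne _)] using hstep i h

theorem isChain_cons_flatten_ofFn_append {k : ℕ} (hk : 0 < k) {f : Fin k → List α} {a b : α}
    (hne : ∀ i, f i ≠ []) (hf : ∀ i, (f i).IsChain R)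
    (hstep : ∀ i (h : i + 1 < k),
      R ((f ⟨i, by omega⟩).getLast (hne _)) ((f ⟨i + 1, h⟩).head (hne _)))
    (ha : R a ((f ⟨0, hk⟩).head (hne _))) (hb : R ((f ⟨k - 1, by omega⟩).getLast (hne _)) b) :
    (a :: ((ofFn f).flatten ++ [b])).IsChain R := by
  have hl : (ofFn f).flatten ≠ [] := by
    simpa [flatten_eq_nil_iff, mem_ofFn] using ⟨⟨0, hk⟩, hne _⟩
  refine isChain_cons.2 ⟨?_, isChain_append.2 ⟨isChain_flatten_ofFn hne hf hstep, .singleton b, ?_⟩⟩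
  · rw [head?_append_of_ne_nil _ hl, head?_eq_some_head hl,
      head_flatten_eq_head_head hl (by simp only [head_ofFn]; exact hne _)]
    simpa only [head_ofFn, Option.mem_some_iff, forall_eq'] using ha
  · rw [getLast?_eq_some_getLast hl,
      getLast_flatten_eq_getLast_getLast hl (by simp only [getLast_ofFn]; exact hne _)]
    simpa only [getLast_ofFn, Option.mem_some_iff, forall_eq', head?_cons] using hb

end List

theorem SimpleGraph.exists_walk_support_eq {V : Type*} {G : SimpleGraph V} {u v : V} {l : List V}
    (h : (u :: (l ++ [v])).IsChain G.Adj) :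
    ∃ p : G.Walk u v, p.support = u :: (l ++ [v]) :=
  ⟨(Walk.ofSupport _ (List.cons_ne_nil _ _) h).copy (List.head_cons ..) (by simp),
    (Walk.support_copy _ _ _).trans (Walk.support_ofSupport _ _)⟩

theorem isRainbowPath_of_support_eq {V α : Type*} {G : SimpleGraph V} {c : V → α} {u v : V}
    {p : G.Walk u v} {l : List V} (hp : p.support = u :: (l ++ [v])) (huv : u ≠ v)
    (hu : u ∉ l) (hv : v ∉ l) (hl : (l.map c).Nodup) : IsRainbowPath G c p := by
  refine ⟨?_, ?_⟩
  · rw [Walk.isPath_def, hp]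
    simp only [List.nodup_cons, List.nodup_append, List.mem_append, List.mem_singleton]
    exact ⟨by tauto, hl.of_map, by simp, fun a ha _ hb => ne_of_mem_of_not_mem ha (hb ▸ hv)⟩
  · simpa [hp] using hl

namespace SatGadget

variable {m n : ℕ}

theorem pathLen_pos {φ : Fin m → Finset (Fin n × Bool)} (hk : ∀ j, 1 ≤ occCount φ j true)
    (hl : ∀ j, 1 ≤ occCount φ j false) (j : Fin n) (b : Bool) : 0 < pathLen φ j b := by
  cases b
  · exact hk j
  · exact hl j

variable (φ : Fin m → Finset (Fin n × Bool))

theorem occIdx_strictMonoOn (j : Fin n) (b : Bool) :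
    StrictMonoOn (occIdx φ j b) {i | (j, b) ∈ φ i} := by
  intro i hi i' _ hii'
  refine Finset.card_lt_card ⟨fun x hx => ?_, fun hsub => ?_⟩
  · simp only [Finset.mem_filter] at hx ⊢
    exact ⟨hx.1, hx.2.1, hx.2.2.trans hii'⟩
  · have := hsub (by simpa [Finset.mem_filter] using ⟨hi, hii'⟩)
    simp at this

def satisfiedVerts (σ : Fin n → Bool) : Set (Vert φ) :=
  {v | ∃ q : PathVert φ, v = Sum.inr q ∧ σ q.1.2.1.1 = q.1.2.1.2}

theorem coloring_injOn_satisfiedVerts (σ : Fin n → Bool) :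
    Set.InjOn (coloring φ) (satisfiedVerts φ σ) := by
  rintro _ ⟨⟨⟨i, ⟨j, b⟩, p⟩, hl, _⟩, rfl, hq⟩ _ ⟨⟨⟨i', ⟨j', b'⟩, p'⟩, hl', _⟩, rfl, hq'⟩ h
  simp only at hq hq' hl hl'
  subst hq hq'
  simp only [coloring, Sum.inl.injEq, Prod.mk.injEq] at h
  obtain ⟨rfl, h⟩ := h
  obtain ⟨rfl, rfl⟩ : i = i' ∧ p = p' := by
    have key := (occIdx_strictMonoOn φ j (σ j)).injOn hl hl'
    cases hσ : σ j <;> simp_all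
  rfl

def occVert {i : Fin m} {l : Fin n × Bool} (hl : l ∈ φ i) (p : Fin (pathLen φ l.1 l.2)) :
    Vert φ :=
  Sum.inr ⟨(i, l, p), hl, p.2⟩

def occPath {i : Fin m} {l : Fin n × Bool} (hl : l ∈ φ i) : List (Vert φ) :=
  List.ofFn (occVert φ hl)

variable {φ}

theorem occVert_inj {i i' : Fin m} {l l' : Fin n × Bool} {hl : l ∈ φ i} {hl' : l' ∈ φ i'}
    {p : Fin (pathLen φ l.1 l.2)} {p' : Fin (pathLen φ l'.1 l'.2)}
    (h : occVert φ hl p = occVert φ hl' p') : i = i' ∧ l = l' ∧ (p : ℕ) = p' := by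
  simpa using Subtype.mk.inj (Sum.inr.inj h)

theorem occVert_injective {i : Fin m} {l : Fin n × Bool} (hl : l ∈ φ i) :
    Function.Injective (occVert φ hl) :=
  fun _ _ h => Fin.ext (occVert_inj h).2.2

theorem adj_occVert_succ {i : Fin m} {l : Fin n × Bool} (hl : l ∈ φ i) {p : ℕ}
    (h : p + 1 < pathLen φ l.1 l.2) :
    (graph φ).Adj (occVert φ hl ⟨p, by omega⟩) (occVert φ hl ⟨p + 1, h⟩) := by
  refine (fromRel_adj _ _ _).2 ⟨fun h' => ?_, Or.inl (Or.inl ⟨rfl, rfl, rfl⟩)⟩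
  simpa using (occVert_inj h').2.2

theorem isChain_occPath {i : Fin m} {l : Fin n × Bool} (hl : l ∈ φ i) :
    (occPath φ hl).IsChain (graph φ).Adj :=
  List.isChain_ofFn.2 fun _ h => adj_occVert_succ hl h

theorem adj_occVert_of_clause_succ {i i' : Fin m} {l l' : Fin n × Bool} (hl : l ∈ φ i)
    (hl' : l' ∈ φ i')
    (hi : (i' : ℕ) = i + 1) {p : Fin (pathLen φ l.1 l.2)} {p' : Fin (pathLen φ l'.1 l'.2)}
    (hp : (p : ℕ) + 1 = pathLen φ l.1 l.2) (hp' : (p' : ℕ) = 0) :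
    (graph φ).Adj (occVert φ hl p) (occVert φ hl' p') := by
  refine (fromRel_adj _ _ _).2 ⟨fun h => ?_, Or.inl (Or.inr ⟨hi, hp, hp'⟩)⟩
  have := (occVert_inj h).1
  omega

theorem adj_start_occVert {i : Fin m} {l : Fin n × Bool} (hl : l ∈ φ i) (hi : (i : ℕ) = 0)
    {p : Fin (pathLen φ l.1 l.2)} (hp : (p : ℕ) = 0) :
    (graph φ).Adj (Sum.inl true) (occVert φ hl p) :=
  (fromRel_adj _ _ _).2 ⟨Sum.inl_ne_inr, Or.inl ⟨hi, hp⟩⟩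

theorem adj_occVert_finish {i : Fin m} {l : Fin n × Bool} (hl : l ∈ φ i) (hi : (i : ℕ) = m - 1)
    {p : Fin (pathLen φ l.1 l.2)} (hp : (p : ℕ) + 1 = pathLen φ l.1 l.2) :
    (graph φ).Adj (occVert φ hl p) (Sum.inl false) :=
  (fromRel_adj _ _ _).2 ⟨Sum.inr_ne_inl, Or.inl ⟨hi, hp⟩⟩

section Route

variable {lit : Fin m → Fin n × Bool} (hlit : ∀ i, lit i ∈ φ i)

/-- The inner vertices of the `s`–`t` path that runs, clause after clause, along the occurrence
path of the literal `lit i` in clause `i`. -/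
def route : List (Vert φ) :=
  (List.ofFn fun i => occPath φ (hlit i)).flatten

theorem mem_route {v : Vert φ} : v ∈ route hlit ↔ ∃ i p, occVert φ (hlit i) p = v := by
  simp [route, occPath, List.mem_flatten, List.mem_ofFn]

theorem inl_not_mem_route (b : Bool) : Sum.inl b ∉ route hlit := fun h => by
  obtain ⟨_, _, h⟩ := (mem_route hlit).1 h
  exact Sum.inr_ne_inl h

theorem nodup_route : (route hlit).Nodup := by
  refine List.nodup_flatten.2 ⟨?_, List.pairwise_ofFn.2 fun i i' hii' => ?_⟩
  · simpa [List.mem_ofFn, occPath, List.nodup_ofFn] using fun i => occVert_injective (hlit i)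
  · simp only [occPath, List.disjoint_iff_ne, List.mem_ofFn]
    rintro _ ⟨p, rfl⟩ _ ⟨p', rfl⟩ h
    exact hii'.ne (occVert_inj h).1

theorem isChain_route (hm : 0 < m) (hlen : ∀ i, 0 < pathLen φ (lit i).1 (lit i).2) :
    (Sum.inl true :: (route hlit ++ ([Sum.inl false] : List (Vert φ)))).IsChain (graph φ).Adj := by
  have hne : ∀ i, occPath φ (hlit i) ≠ [] := fun i => by simpa [occPath] using (hlen i).ne'
  refine List.isChain_cons_flatten_ofFn_append hm hne (fun i => isChain_occPath _)
    (fun i h => ?_) ?_ ?_ <;> simp only [occPath, List.head_ofFn, List.getLast_ofFn]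
  · exact adj_occVert_of_clause_succ _ _ rfl (Nat.sub_add_cancel (hlen _)) rfl
  · exact adj_start_occVert _ rfl rfl
  · exact adj_occVert_finish _ rfl (Nat.sub_add_cancel (hlen _))

theorem mem_satisfiedVerts_of_mem_route {σ : Fin n → Bool} (hσ : ∀ i, σ (lit i).1 = (lit i).2)
    {v : Vert φ} (hv : v ∈ route hlit) : v ∈ satisfiedVerts φ σ := by
  obtain ⟨i, p, rfl⟩ := (mem_route hlit).1 hv
  exact ⟨⟨(i, lit i, p), hlit i, p.2⟩, rfl, hσ i⟩

theorem nodup_map_coloring_route {σ : Fin n → Bool} (hσ : ∀ i, σ (lit i).1 = (lit i).2) :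
    ((route hlit).map (coloring φ)).Nodup :=
  (nodup_route hlit).map_on fun _ hv _ hw => coloring_injOn_satisfiedVerts φ σ
    (mem_satisfiedVerts_of_mem_route hlit hσ hv) (mem_satisfiedVerts_of_mem_route hlit hσ hw)

end Route

end SatGadget

open SatGadget in
theorem rainbow_path_of_satisfiable_general {m n : ℕ} (hm : 0 < m)
    (φ : Fin m → Finset (Fin n × Bool))
    (hk : ∀ j, 1 ≤ occCount φ j true) (hl : ∀ j, 1 ≤ occCount φ j false)
    (hsat : ∃ σ : Fin n → Bool, ∀ i : Fin m, ∃ l ∈ φ i, σ l.1 = l.2) :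
    ∃ p : (graph φ).Walk (Sum.inl true) (Sum.inl false),
      IsRainbowPath (graph φ) (coloring φ) p := by
  obtain ⟨σ, hσ⟩ := hsat
  choose lit hlit hlit_true using hσ
  obtain ⟨p, hp⟩ := exists_walk_support_eq
    (isChain_route hlit hm fun _ => pathLen_pos hk hl _ _)
  exact ⟨p, isRainbowPath_of_support_eq hp (Sum.inl_injective.ne Bool.noConfusion)
    (inl_not_mem_route hlit true) (inl_not_mem_route hlit false)
    (nodup_map_coloring_route hlit hlit_true)⟩

open SatGadget in
/-- if the 3-CNF formula `φ` is satisfiable, then `G_φ` contains a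
rainbow path from `s` to `t`. -/
theorem rainbow_path_of_satisfiable {m n : ℕ} (hm : 0 < m)
    (φ : Fin m → Finset (Fin n × Bool))
    (h3 : ∀ i, (φ i).card ≤ 3)
    (hk : ∀ j, 1 ≤ occCount φ j true) (hl : ∀ j, 1 ≤ occCount φ j false)
    (hsat : ∃ σ : Fin n → Bool, ∀ i : Fin m, ∃ l ∈ φ i, σ l.1 = l.2) :
    ∃ p : (graph φ).Walk (Sum.inl true) (Sum.inl false),
      IsRainbowPath (graph φ) (coloring φ) p :=
  rainbow_path_of_satisfiable_general hm φ hk hl hsat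
end

section
/- Let G be a connected graph of order n ≥ 2. Then rvc(G) ≤ n − 2. -/
open SimpleGraph

/-- `G` has a rainbow-vertex-connecting coloring with `k` colors: there is a vertex
coloring such that any two distinct vertices are joined by a path whose internal
vertices have pairwise distinct colors, all of them among the `k` colors `0, …, k-1`
(the colors of vertices that are never used as internal vertices are irrelevant, so
a complete graph needs `0` colors). -/
def HasRVCColoring {V : Type*} (G : SimpleGraph V) (k : ℕ) : Prop :=
  ∃ c : V → ℕ, ∀ u v : V, u ≠ v → ∃ p : G.Walk u v, p.IsPath ∧
    (p.support.tail.dropLast.map c).Nodup ∧ ∀ w ∈ p.support.tail.dropLast, c w < k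

/-- The rainbow vertex-connection number of `G`: the smallest number of colors needed
to make `G` rainbow vertex-connected. -/
noncomputable def rvc {V : Type*} (G : SimpleGraph V) : ℕ :=
  sInf {k | HasRVCColoring G k}

/-!
Fix a spanning tree `T` of `G`. A nontrivial finite tree has two distinct leaves, and a leaf is
never an internal vertex of a path. Giving the other `n - 2` vertices pairwise distinct colors
therefore makes the `T`-path between any two vertices, which is also a path of `G`, rainbow.
-/

namespace SimpleGraph

variable {V : Type*} {G : SimpleGraph V}

lemma Walk.IsPath.exists_adj_adj_ne_of_mem_support_tail_dropLast {u v x : V} {p : G.Walk u v}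
    (hp : p.IsPath) (hx : x ∈ p.support.tail.dropLast) :
    ∃ a b, G.Adj x a ∧ G.Adj x b ∧ a ≠ b := by
  induction p with
  | nil => simp at hx
  | @cons u w v huw q ih =>
    cases q with
    | nil => simp at hx
    | @cons _ w' _ hww' r =>
      rw [Walk.support_cons, List.tail_cons, Walk.support_cons,
        List.dropLast_cons_of_ne_nil r.support_ne_nil] at hx
      rcases List.mem_cons.mp hx with rfl | hx
      · refine ⟨u, w', huw.symm, hww', ?_⟩
        rintro rfl
        exact (Walk.cons_isPath_iff _ _).mp hp |>.2 (by simp)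
      · exact ih hp.of_cons (by simpa using hx)

lemma Walk.IsPath.notMem_support_tail_dropLast_of_degree_eq_one {u v x : V} {p : G.Walk u v}
    (hp : p.IsPath) [Fintype (G.neighborSet x)] (hx : G.degree x = 1) :
    x ∉ p.support.tail.dropLast := by
  intro hmem
  obtain ⟨a, b, ha, hb, hab⟩ := hp.exists_adj_adj_ne_of_mem_support_tail_dropLast hmem
  obtain ⟨y, -, hy⟩ := degree_eq_one_iff_existsUnique_adj.mp hx
  exact hab ((hy a ha).trans (hy b hb).symm)

/-- Witnessed by any coloring that is injective on `s`. -/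
lemma hasRVCColoring_card_of_forall_exists_isPath (s : Finset V)
    (h : ∀ u v, u ≠ v →
      ∃ p : G.Walk u v, p.IsPath ∧ ∀ w ∈ p.support.tail.dropLast, w ∈ s) :
    HasRVCColoring G s.card := by
  classical
  let c : V → ℕ := fun v ↦ if hv : v ∈ s then s.equivFin ⟨v, hv⟩ else 0
  refine ⟨c, fun u v huv ↦ ?_⟩
  obtain ⟨p, hp, hs⟩ := h u v huv
  have hnodup : p.support.tail.dropLast.Nodup :=
    (List.dropLast_sublist _).nodup hp.support_nodup.tail
  refine ⟨p, hp, hnodup.map_on fun a ha b hb hab ↦ ?_, fun w hw ↦ ?_⟩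
  · simp only [c, dif_pos (hs a ha), dif_pos (hs b hb)] at hab
    exact congrArg Subtype.val (s.equivFin.injective (Fin.val_injective hab))
  · simp only [c, dif_pos (hs w hw)]
    exact (s.equivFin _).isLt

lemma rvc_le_of_hasRVCColoring {k : ℕ} (h : HasRVCColoring G k) : rvc G ≤ k :=
  Nat.sInf_le h

end SimpleGraph

/-- a connected graph of order `n ≥ 2` has `rvc G ≤ n − 2`. -/
theorem rvc_le_card_sub_two {V : Type*} [Fintype V] (G : SimpleGraph V)
    (hG : G.Connected) (h2 : 2 ≤ Fintype.card V) :
    rvc G ≤ Fintype.card V - 2 := by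
  classical
  have : Nontrivial V := Fintype.one_lt_card_iff_nontrivial.mp h2
  obtain ⟨T, hTG, hT⟩ := hG.exists_isTree_le
  obtain ⟨x, y, hxy, hx, hy⟩ := hT.exists_ne_and_degree_eq_one
  have hcard : ({x, y}ᶜ : Finset V).card = Fintype.card V - 2 := by
    rw [Finset.card_compl, Finset.card_pair hxy]
  rw [← hcard]
  refine rvc_le_of_hasRVCColoring <| hasRVCColoring_card_of_forall_exists_isPath _ fun u v _ ↦ ?_
  obtain ⟨p, hp⟩ := hT.connected.exists_isPath u v
  refine ⟨p.mapLe hTG, hp.mapLe hTG, fun w hw ↦ ?_⟩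
  rw [Walk.support_mapLe_eq_support] at hw
  simp only [Finset.mem_compl, Finset.mem_insert, Finset.mem_singleton, not_or]
  exact ⟨fun h ↦ hp.notMem_support_tail_dropLast_of_degree_eq_one hx (h ▸ hw),
    fun h ↦ hp.notMem_support_tail_dropLast_of_degree_eq_one hy (h ▸ hw)⟩
end

section
/- Let G be a connected graph of order n ≥ 2. Then rc(G) = n − 1 if and only if G is a tree. -/
open SimpleGraph

/-- `G` has a rainbow-connecting edge coloring with `k` colors: there is an edge coloring
such that any two distinct vertices are joined by a path whose edges have pairwise
distinct colors, all of them among the `k` colors `0, …, k-1`. -/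
def HasRCColoring {V : Type*} (G : SimpleGraph V) (k : ℕ) : Prop :=
  ∃ c : Sym2 V → ℕ, ∀ u v : V, u ≠ v → ∃ p : G.Walk u v, p.IsPath ∧
    (p.edges.map c).Nodup ∧ ∀ e ∈ p.edges, c e < k

/-- The rainbow connection number of `G`: the smallest number of colors needed to make
`G` rainbow connected. -/
noncomputable def rc {V : Type*} (G : SimpleGraph V) : ℕ :=
  sInf {k | HasRCColoring G k}

/-!
A tree needs `n - 1` colors: its rainbow paths are its unique paths, and any two of its edges lie
on a common path, so a rainbow-connecting coloring is injective on its `n - 1` edges; coloring the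
edges injectively does make it rainbow connected.

A connected graph that is not a tree has a spanning tree `T` and an edge `xy` outside `T`. Give
`xy` and the first and last edges `e₁`, `e₂` of the `T`-path `P` from `x` to `y` one common color,
and the remaining `n - 3` edges of `T` distinct colors. A `T`-path is then rainbow unless it uses
both `e₁` and `e₂`; in that case it runs through all of `P`, and replacing `P` by `xy` leaves a
rainbow walk, which contains a rainbow path. Hence `rc G ≤ n - 2`.
-/

lemma Set.injOn_ite_mem {α : Type*} {K S : Set α} [DecidablePred (· ∈ K)] {r : α}
    (hr : r ∈ K) (hS : (S ∩ K).Subsingleton) :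
    Set.InjOn (fun a => if a ∈ K then r else a) S := by
  intro a ha b hb hab
  by_cases haK : a ∈ K <;> by_cases hbK : b ∈ K <;> simp only [haK, hbK, if_true, if_false] at hab
  · exact hS ⟨ha, haK⟩ ⟨hb, hbK⟩
  · exact absurd (hab ▸ hr) hbK
  · exact absurd (hab ▸ hr) haK
  · exact hab

section

variable {V : Type*} {G : SimpleGraph V}

lemma rc_le {k : ℕ} (h : HasRCColoring G k) : rc G ≤ k :=
  Nat.sInf_le h

lemma hasRCColoring_rc {k : ℕ} (h : HasRCColoring G k) : HasRCColoring G (rc G) :=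
  Nat.sInf_mem (s := {k | HasRCColoring G k}) ⟨k, h⟩

lemma hasRCColoring_card {α : Type*} (c : Sym2 V → α) (s : Finset α)
    (h : ∀ u v, u ≠ v → ∃ p : G.Walk u v, p.IsPath ∧ (p.edges.map c).Nodup ∧
      ∀ e ∈ p.edges, c e ∈ s) :
    HasRCColoring G s.card := by
  classical
  let index : α → ℕ := fun a => if ha : a ∈ s then s.equivFin ⟨a, ha⟩ else 0
  have index_lt : ∀ a ∈ s, index a < s.card := fun a ha => by simp [index, ha]
  have index_injOn : Set.InjOn index s := fun a ha b hb hab => by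
    rw [Finset.mem_coe] at ha hb
    simp only [index, dif_pos ha, dif_pos hb, Fin.val_inj] at hab
    simpa using s.equivFin.injective hab
  refine ⟨index ∘ c, fun u v huv => ?_⟩
  obtain ⟨p, hp, hnodup, hmem⟩ := h u v huv
  refine ⟨p, hp, ?_, fun e he => index_lt _ (hmem e he)⟩
  rw [← List.map_map]
  have colors_mem : ∀ a ∈ p.edges.map c, a ∈ s := by
    simpa using hmem
  exact hnodup.map_on fun a ha b hb => index_injOn (colors_mem a ha) (colors_mem b hb)

namespace SimpleGraph

lemma Walk.IsPath.nodup_map_edges_iff {α : Type*} {c : Sym2 V → α} {u v : V} {p : G.Walk u v}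
    (hp : p.IsPath) : (p.edges.map c).Nodup ↔ Set.InjOn c {e | e ∈ p.edges} :=
  List.nodup_map_iff_inj_on hp.isTrail.edges_nodup

lemma Walk.exists_eq_append_append_of_mem_support {u w x y : V} (q : G.Walk u w)
    (hx : x ∈ q.support) (hy : y ∈ q.support) :
    ∃ (a b : V) (A : G.Walk u a) (M : G.Walk a b) (C : G.Walk b w),
      s(a, b) = s(x, y) ∧ q = A.append (M.append C) := by
  classical
  by_cases hyx : y ∈ (q.dropUntil x hx).support
  · refine ⟨x, y, q.takeUntil x hx, (q.dropUntil x hx).takeUntil y hyx,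
      (q.dropUntil x hx).dropUntil y hyx, rfl, ?_⟩
    rw [Walk.take_spec, Walk.take_spec]
  · have hyx' : y ∈ (q.takeUntil x hx).support := by
      rw [← q.take_spec hx, Walk.mem_support_append_iff] at hy
      exact hy.resolve_right hyx
    refine ⟨y, x, (q.takeUntil x hx).takeUntil y hyx', (q.takeUntil x hx).dropUntil y hyx',
      q.dropUntil x hx, Sym2.eq_swap, ?_⟩
    rw [Walk.append_assoc, Walk.take_spec, Walk.take_spec]

lemma IsAcyclic.exists_isPath_extend (hG : G.IsAcyclic) {u a b : V} {q : G.Walk u a}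
    (hq : q.IsPath) (hab : G.Adj a b) :
    ∃ (t : V) (r : G.Walk u t), r.IsPath ∧ s(a, b) ∈ r.edges ∧ ∀ e ∈ q.edges, e ∈ r.edges := by
  classical
  by_cases hb : b ∈ q.support
  · refine ⟨a, q, hq, ?_, fun e he => he⟩
    rw [hG.path_concat (hq.takeUntil hb) hq hab.symm hb, Walk.edges_concat]
    simp [Sym2.eq_swap]
  · refine ⟨b, q.concat hab, hq.concat hb hab, by simp [Walk.edges_concat], fun e he => ?_⟩
    simp [Walk.edges_concat, he]

lemma IsTree.exists_isPath_mem_edges_mem_edges (hG : G.IsTree) {e₁ e₂ : Sym2 V}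
    (h₁ : e₁ ∈ G.edgeSet) (h₂ : e₂ ∈ G.edgeSet) :
    ∃ (u v : V) (p : G.Walk u v), p.IsPath ∧ e₁ ∈ p.edges ∧ e₂ ∈ p.edges := by
  induction e₁ using Sym2.ind with | _ a b =>
  induction e₂ using Sym2.ind with | _ x y =>
  obtain ⟨q, hq, -⟩ := hG.existsUnique_path x a
  obtain ⟨t, r, hr, hab, -⟩ := hG.isAcyclic.exists_isPath_extend hq h₁
  obtain ⟨t', r', hr', hxy, hsub⟩ := hG.isAcyclic.exists_isPath_extend hr.reverse h₂
  exact ⟨t, t', r', hr', hsub _ (by simpa using hab), hxy⟩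

lemma IsAcyclic.exists_walk_shortcut {T : SimpleGraph V} (hT : T.IsAcyclic) (hle : T ≤ G)
    {x y u w : V} (hxy : G.Adj x y) {P : T.Walk x y} (hP : P.IsPath) {q : T.Walk u w}
    (hq : q.IsPath) (hx : x ∈ q.support) (hy : y ∈ q.support) :
    ∃ W : G.Walk u w, ∀ e ∈ W.edges, e = s(x, y) ∨ e ∈ q.edges ∧ e ∉ P.edges := by
  obtain ⟨a, b, A, M, C, hab, rfl⟩ := q.exists_eq_append_append_of_mem_support hx hy
  have hM : M.IsPath := hq.of_append_right.of_append_left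
  have hPM : ∀ e ∈ P.edges, e ∈ M.edges := by
    rcases Sym2.eq_iff.1 hab with ⟨rfl, rfl⟩ | ⟨rfl, rfl⟩
    · obtain rfl : P = M := congrArg Subtype.val <|
        (hT.subsingleton_path _ _).elim ⟨P, hP⟩ ⟨M, hM⟩
      exact fun e he => he
    · obtain rfl : P = M.reverse := congrArg Subtype.val <|
        (hT.subsingleton_path _ _).elim ⟨P, hP⟩ ⟨M.reverse, hM.reverse⟩
      simp
  have hnodup := hq.isTrail.edges_nodup
  rw [Walk.edges_append, Walk.edges_append] at hnodup
  have hA : List.Disjoint A.edges (M.edges ++ C.edges) := List.disjoint_of_nodup_append hnodup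
  have hC : List.Disjoint M.edges C.edges :=
    List.disjoint_of_nodup_append (List.nodup_append.1 hnodup).2.1
  have hGab : G.Adj a b := by rw [← mem_edgeSet, hab]; exact hxy
  refine ⟨(A.mapLe hle).append (Walk.cons hGab (C.mapLe hle)), fun e he => ?_⟩
  simp only [Walk.edges_append, Walk.edges_cons, Walk.edges_mapLe_eq_edges, List.mem_append,
    List.mem_cons] at he
  rcases he with he | rfl | he
  · exact .inr ⟨by simp [he], fun heP => hA he (List.mem_append_left _ (hPM e heP))⟩
  · exact .inl hab
  · exact .inr ⟨by simp [he], fun heP => hC (hPM e heP) he⟩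

lemma IsTree.hasRCColoring [Fintype V] (hG : G.IsTree) :
    HasRCColoring G (Fintype.card V - 1) := by
  classical
  rw [← hG.card_edgeFinset, Nat.add_sub_cancel]
  refine hasRCColoring_card id G.edgeFinset fun u v _ => ?_
  obtain ⟨p, hp, -⟩ := hG.existsUnique_path u v
  exact ⟨p, hp, by simpa using hp.isTrail.edges_nodup,
    fun e he => mem_edgeFinset.2 (p.edges_subset_edgeSet he)⟩

lemma IsTree.card_sub_one_le_of_hasRCColoring [Fintype V] (hG : G.IsTree) {k : ℕ}
    (h : HasRCColoring G k) : Fintype.card V - 1 ≤ k := by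
  classical
  obtain ⟨c, hc⟩ := h
  have injective_and_bounded : ∀ e₁ ∈ G.edgeFinset, ∀ e₂ ∈ G.edgeFinset,
      (c e₁ = c e₂ → e₁ = e₂) ∧ c e₁ < k := by
    intro e₁ h₁ e₂ h₂
    obtain ⟨u, v, r, hr, he₁, he₂⟩ :=
      hG.exists_isPath_mem_edges_mem_edges (mem_edgeFinset.1 h₁) (mem_edgeFinset.1 h₂)
    have huv : u ≠ v := by
      rintro rfl
      simp [Walk.edges_eq_nil.2 (Walk.isPath_iff_nil.1 hr)] at he₁
    obtain ⟨p, hp, hnodup, hlt⟩ := hc u v huv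
    obtain rfl := (hG.existsUnique_path u v).unique hp hr
    exact ⟨fun h => hp.nodup_map_edges_iff.1 hnodup he₁ he₂ h, hlt e₁ he₁⟩
  have hcard : G.edgeFinset.card ≤ (Finset.range k).card :=
    Finset.card_le_card_of_injOn c (fun e he => Finset.mem_range.2 (injective_and_bounded e he e he).2)
      (fun e₁ h₁ e₂ h₂ => (injective_and_bounded e₁ h₁ e₂ h₂).1)
  have := hG.card_edgeFinset
  simp only [Finset.card_range] at hcard
  omega

lemma IsTree.exists_isPath_subsingleton_inter {T : SimpleGraph V} (hT : T.IsTree) (hle : T ≤ G)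
    {x y x' y' : V} (hxy : G.Adj x y) (hTxy : ¬T.Adj x y) {P : T.Walk x y} (hP : P.IsPath)
    (hx' : s(x, x') ∈ P.edges) (hy' : s(y', y) ∈ P.edges) (u w : V) :
    ∃ p : G.Walk u w, p.IsPath ∧
      ({e | e ∈ p.edges} ∩ {s(x, x'), s(y', y), s(x, y)}).Subsingleton ∧
      ∀ e ∈ p.edges, e ∈ T.edgeSet ∨ e = s(x, y) := by
  classical
  obtain ⟨q, hq, -⟩ := hT.existsUnique_path u w
  by_cases hboth : s(x, x') ∈ q.edges ∧ s(y', y) ∈ q.edges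
  · obtain ⟨W, hW⟩ := hT.isAcyclic.exists_walk_shortcut hle hxy hP hq
      (q.fst_mem_support_of_mem_edges hboth.1) (q.snd_mem_support_of_mem_edges hboth.2)
    have hWK : ∀ e ∈ W.bypass.edges, e ∈ ({s(x, x'), s(y', y), s(x, y)} : Set _) →
        e = s(x, y) := by
      intro e he heK
      rcases hW e (W.edges_bypass_subset_edges he) with h | ⟨-, heP⟩
      · exact h
      · rcases heK with rfl | rfl | rfl
        exacts [absurd hx' heP, absurd hy' heP, rfl]
    refine ⟨W.bypass, W.bypass_isPath, fun a ha b hb => ?_, fun e he => ?_⟩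
    · rw [hWK a ha.1 ha.2, hWK b hb.1 hb.2]
    · exact ((hW e (W.edges_bypass_subset_edges he)).imp_right
        fun h => q.edges_subset_edgeSet h.1).symm
  · have hxyq : s(x, y) ∉ q.edges := fun h => hTxy (q.edges_subset_edgeSet h)
    refine ⟨q.mapLe hle, hq.mapLe hle, ?_, fun e he => ?_⟩
    · rintro a ⟨ha, haK⟩ b ⟨hb, hbK⟩
      simp only [Walk.edges_mapLe_eq_edges] at ha hb
      rcases haK with rfl | rfl | rfl <;> rcases hbK with rfl | rfl | rfl <;> tauto
    · rw [Walk.edges_mapLe_eq_edges] at he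
      exact .inl (q.edges_subset_edgeSet he)

lemma IsTree.hasRCColoring_card_sub_two_of_le [Fintype V] {T : SimpleGraph V} (hT : T.IsTree)
    (hle : T ≤ G) {x y : V} (hxy : G.Adj x y) (hTxy : ¬T.Adj x y) :
    HasRCColoring G (Fintype.card V - 2) := by
  classical
  obtain ⟨P, hP, -⟩ := hT.existsUnique_path x y
  have hPnil : ¬P.Nil := Walk.not_nil_of_ne hxy.ne
  set e₁ := s(x, P.snd)
  set e₂ := s(P.penultimate, y)
  have he₁P : e₁ ∈ P.edges := P.mk_start_snd_mem_edges hPnil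
  have he₂P : e₂ ∈ P.edges := P.mk_penultimate_end_mem_edges hPnil
  have he₁₂ : e₁ ≠ e₂ := by
    intro h
    rcases Sym2.eq_iff.1 h with ⟨-, h⟩ | ⟨h, -⟩
    · exact hTxy (h ▸ P.adj_snd hPnil)
    · exact hxy.ne h
  set K : Set (Sym2 V) := {e₁, e₂, s(x, y)}
  set colors := T.edgeFinset.erase e₂
  have hcard : colors.card = Fintype.card V - 2 := by
    have := hT.card_edgeFinset
    rw [Finset.card_erase_of_mem (mem_edgeFinset.2 (P.edges_subset_edgeSet he₂P))]
    omega
  have mem_colors : ∀ e, e ∈ T.edgeSet ∨ e = s(x, y) → (if e ∈ K then e₁ else e) ∈ colors := by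
    intro e he
    split_ifs with heK
    · exact Finset.mem_erase.2 ⟨he₁₂, mem_edgeFinset.2 (P.edges_subset_edgeSet he₁P)⟩
    · simp only [K, Set.mem_insert_iff, Set.mem_singleton_iff, not_or] at heK
      exact Finset.mem_erase.2 ⟨heK.2.1, mem_edgeFinset.2 (he.resolve_right heK.2.2)⟩
  rw [← hcard]
  refine hasRCColoring_card (fun e => if e ∈ K then e₁ else e) colors fun u w _ => ?_
  obtain ⟨p, hp, hK, hpT⟩ :=
    hT.exists_isPath_subsingleton_inter hle hxy hTxy hP he₁P he₂P u w
  exact ⟨p, hp, hp.nodup_map_edges_iff.2 (Set.injOn_ite_mem (by simp [K]) hK),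
    fun e he => mem_colors e (hpT e he)⟩

lemma Connected.hasRCColoring_card_sub_two [Fintype V] (hG : G.Connected) (hac : ¬G.IsAcyclic) :
    HasRCColoring G (Fintype.card V - 2) := by
  obtain ⟨T, hle, hT⟩ := hG.exists_isTree_le
  obtain ⟨x, y, hxy, hTxy⟩ : ∃ x y, G.Adj x y ∧ ¬T.Adj x y := by
    by_contra! hGT
    exact hac (hT.isAcyclic.anti fun x y => hGT x y)
  exact hT.hasRCColoring_card_sub_two_of_le hle hxy hTxy

end SimpleGraph

end

/-- a connected graph of order `n ≥ 2` has `rc G = n − 1` iff `G` is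
a tree. -/
theorem rc_eq_card_sub_one_iff_isTree {V : Type*} [Fintype V] (G : SimpleGraph V)
    (hG : G.Connected) (h2 : 2 ≤ Fintype.card V) :
    rc G = Fintype.card V - 1 ↔ G.IsTree := by
  refine ⟨fun hrc => ?_, fun hT => ?_⟩
  · by_contra hT
    have := rc_le (hG.hasRCColoring_card_sub_two fun hac => hT ⟨hG, hac⟩)
    omega
  · exact le_antisymm (rc_le hT.hasRCColoring)
      (hT.card_sub_one_le_of_hasRCColoring (hasRCColoring_rc hT.hasRCColoring))
end
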